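/- arXiv:0812.4154 — 2 statements merged into one kernel-verified Lean document; each statement's English description precedes it below -/
import Mathlib

section
/- Let P be a regular H-palindromic matrix polynomial of degree m ≥ 1 with n×n coefficients, let v ∈ ℂ^m with ‖v‖₂ = 1, and let L(z) = zX + Y be a pencil in L₁(P) with right ansatz vector v that is either H-palindromic (X = Yᴴ) with Rv = v̄ or H-anti-palindromic (X = −Yᴴ) with Rv = −v̄; let S denote the corresponding class of structured pencil perturbations (ΔX = ΔYᴴ in the first case, ΔX = −ΔYᴴ in the second). Let λ ∈ ℂ with |λ| = 1 and x ∈ ℂⁿ with ‖x‖₂ = 1 and P(λ)x ≠ 0. Then √((m+1)/(2m)) ≤ η_F^S(λ, Λ_{m−1}(λ) ⊗ x, L) / η_F(λ, x, P) ≤ √2, and moreover η_F^S(λ, Λ_{m−1}(λ) ⊗ x, L) / η_F^{S_p}(λ, x, P) ≤ √2, where S_p is the class of H-palindromic matrix polynomials of degree m. For the spectral norm, √((m+1)/(2m)) ≤ η₂^S(λ, Λ_{m−1}(λ) ⊗ x, L) / η₂(λ, x, P) ≤ √2. -/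
noncomputable section

/-- Euclidean (ℓ²) norm of a complex vector. -/
def vnorm {α : Type*} [Fintype α] (x : α → ℂ) : ℝ :=
  Real.sqrt (∑ i, ‖x i‖ ^ 2)

/-- Frobenius norm of a complex matrix. -/
def frobNorm {α : Type*} [Fintype α] (A : Matrix α α ℂ) : ℝ :=
  Real.sqrt (∑ i, ∑ j, ‖A i j‖ ^ 2)

/-- Spectral (operator 2-)norm of a complex matrix. -/
def specNorm {α : Type*} [Fintype α] [DecidableEq α] (A : Matrix α α ℂ) : ℝ :=
  ‖Matrix.toEuclideanCLM (𝕜 := ℂ) A‖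

/-- Evaluation of the matrix polynomial `P(z) = ∑_{j=0}^m z^j A_j`. -/
def evalP {n : ℕ} (m : ℕ) (A : ℕ → Matrix (Fin n) (Fin n) ℂ) (z : ℂ) :
    Matrix (Fin n) (Fin n) ℂ :=
  ∑ j ∈ Finset.range (m + 1), z ^ j • A j

/-- `‖Λ_m‖₂² = ∑_{j=0}^m |λ|^{2j}` where `Λ_m = (1, λ, …, λ^m)ᵀ`. -/
def LamNormSq (m : ℕ) (lam : ℂ) : ℝ :=
  ∑ j ∈ Finset.range (m + 1), ‖lam‖ ^ (2 * j)

/-- `‖Π₊(Λ_m)‖₂²`. -/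
def PiPlusSq (m : ℕ) (lam : ℂ) : ℝ :=
  if m % 2 = 1 then
    ∑ j ∈ Finset.range ((m + 1) / 2), ‖lam ^ j + lam ^ (m - j)‖ ^ 2 / 2
  else
    (∑ j ∈ Finset.range (m / 2), ‖lam ^ j + lam ^ (m - j)‖ ^ 2 / 2) + ‖lam ^ (m / 2)‖ ^ 2

/-- `‖Π₋(Λ_m)‖₂²`. -/
def PiMinusSq (m : ℕ) (lam : ℂ) : ℝ :=
  if m % 2 = 1 then
    ∑ j ∈ Finset.range ((m + 1) / 2), ‖lam ^ j - lam ^ (m - j)‖ ^ 2 / 2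
  else
    ∑ j ∈ Finset.range (m / 2), ‖lam ^ j - lam ^ (m - j)‖ ^ 2 / 2

/-- `Λ_{m-1}(z) = (z^{m-1}, …, z, 1)ᵀ ∈ ℂ^m`. -/
def Lam1 (m : ℕ) (z : ℂ) : Fin m → ℂ := fun i => z ^ (m - 1 - (i : ℕ))

/-- Kronecker product of a vector in `ℂ^m` with a vector in `ℂ^n`. -/
def vKron {m n : ℕ} (u : Fin m → ℂ) (x : Fin n → ℂ) : Fin m × Fin n → ℂ :=
  fun p => u p.1 * x p.2

/-- Kronecker product `u ⊗ B` of a column vector `u ∈ ℂ^m` with an `n × n` matrix `B`,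
an `mn × n` matrix. -/
def colKron {m n : ℕ} (u : Fin m → ℂ) (B : Matrix (Fin n) (Fin n) ℂ) :
    Matrix (Fin m × Fin n) (Fin n) ℂ :=
  fun p j => u p.1 * B p.2 j

/-- Frobenius-norm structured backward error over H-palindromic polynomials of degree `m`. -/
def etaF_Hpal {n : ℕ} (m : ℕ) (A : ℕ → Matrix (Fin n) (Fin n) ℂ) (lam : ℂ)
    (x : Fin n → ℂ) : ℝ :=
  sInf { e : ℝ | ∃ Δ : ℕ → Matrix (Fin n) (Fin n) ℂ,
    (∀ j ≤ m, Δ (m - j) = (Δ j).conjTranspose) ∧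
    (evalP m A lam).mulVec x + (evalP m Δ lam).mulVec x = 0 ∧
    e = Real.sqrt (∑ j ∈ Finset.range (m + 1), frobNorm (Δ j) ^ 2) }

/-- Frobenius-norm structured backward error of `(λ, u)` for the pencil `L(z) = zX + Y`
over H-palindromic (`ε = 1`, `ΔX = ΔYᴴ`) or H-anti-palindromic (`ε = −1`, `ΔX = −ΔYᴴ`)
pencil perturbations. -/
def etaPencilF_Heps {m n : ℕ} (ε : ℂ) (X Y : Matrix (Fin m × Fin n) (Fin m × Fin n) ℂ)
    (lam : ℂ) (u : Fin m × Fin n → ℂ) : ℝ :=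
  sInf { e : ℝ | ∃ ΔX ΔY : Matrix (Fin m × Fin n) (Fin m × Fin n) ℂ,
    ΔX = ε • ΔY.conjTranspose ∧
    (lam • X + Y + lam • ΔX + ΔY).mulVec u = 0 ∧
    e = Real.sqrt (frobNorm ΔX ^ 2 + frobNorm ΔY ^ 2) }

/-- Spectral-norm structured backward error of `(λ, u)` for the pencil `L(z) = zX + Y`
over H-palindromic (`ε = 1`) or H-anti-palindromic (`ε = −1`) pencil perturbations. -/
def etaPencil2_Heps {m n : ℕ} (ε : ℂ) (X Y : Matrix (Fin m × Fin n) (Fin m × Fin n) ℂ)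
    (lam : ℂ) (u : Fin m × Fin n → ℂ) : ℝ :=
  sInf { e : ℝ | ∃ ΔX ΔY : Matrix (Fin m × Fin n) (Fin m × Fin n) ℂ,
    ΔX = ε • ΔY.conjTranspose ∧
    (lam • X + Y + lam • ΔX + ΔY).mulVec u = 0 ∧
    e = Real.sqrt (specNorm ΔX ^ 2 + specNorm ΔY ^ 2) }

/-!
Put `u = Λ_{m-1}(λ) ⊗ x` and `K = ‖P(λ)x‖`. Then `L(λ)u = v ⊗ P(λ)x`, so `‖L(λ)u‖ = K`,
`‖u‖ = √m`, and `η(λ, x, P) = K / √(m+1)` because `|λ| = 1`.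

Every admissible pencil perturbation satisfies `K ≤ (‖ΔX‖₂ + ‖ΔY‖₂) ‖u‖`, whence
`K / √(2m) ≤ η₂ ≤ η_F`. Conversely, the palindromic structure of `P` and the symmetry
`Rv = ε v̄` of the ansatz vector force `⟪u, L(λ)u⟫ = λε · conj ⟪u, L(λ)u⟫`. This is exactly the
condition under which a Frobenius-small Hermitian matrix mapping `u` to a rotation of `-L(λ)u`,
rescaled by a square root of `λε`, yields `ΔY` with `(λε ΔYᴴ + ΔY) u = -L(λ)u` and
`‖ΔY‖_F² ≤ K² / (2m)`; taking `ΔX = ε ΔYᴴ` gives `η_F ≤ K / √m ≤ √2 K / √(m+1)`.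
For the polynomial, any perturbation at `|λ| = 1` costs at least `K / √(m+1)` in the
Frobenius norm.
-/

open Matrix

section Norms

open scoped Matrix.Norms.Frobenius

variable {ι : Type*} [Fintype ι]

lemma vnorm_eq_norm_toLp (x : ι → ℂ) : vnorm x = ‖WithLp.toLp 2 x‖ := by
  rw [EuclideanSpace.norm_eq]; rfl

lemma vnorm_nonneg (x : ι → ℂ) : 0 ≤ vnorm x := Real.sqrt_nonneg _

lemma vnorm_sq (x : ι → ℂ) : vnorm x ^ 2 = ∑ i, ‖x i‖ ^ 2 :=
  Real.sq_sqrt (Finset.sum_nonneg fun _ _ => sq_nonneg _)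

lemma vnorm_pos {x : ι → ℂ} (hx : x ≠ 0) : 0 < vnorm x := by
  rw [vnorm_eq_norm_toLp, norm_pos_iff]
  exact fun h => hx (congrArg WithLp.ofLp h)

lemma vnorm_smul (c : ℂ) (x : ι → ℂ) : vnorm (c • x) = ‖c‖ * vnorm x := by
  rw [vnorm_eq_norm_toLp, vnorm_eq_norm_toLp, WithLp.toLp_smul, norm_smul]

lemma vnorm_neg (x : ι → ℂ) : vnorm (-x) = vnorm x := by
  rw [vnorm_eq_norm_toLp, vnorm_eq_norm_toLp, WithLp.toLp_neg, norm_neg]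

lemma star_dotProduct_self (x : ι → ℂ) : star x ⬝ᵥ x = ((vnorm x ^ 2 : ℝ) : ℂ) := by
  rw [vnorm_sq]
  push_cast
  exact Finset.sum_congr rfl fun i _ => Complex.conj_mul' (x i)

lemma frobNorm_eq_norm (A : Matrix ι ι ℂ) : frobNorm A = ‖A‖ := by
  rw [frobenius_norm_def, frobNorm, Real.sqrt_eq_rpow]
  simp only [Real.rpow_two]

lemma frobNorm_sq (A : Matrix ι ι ℂ) : frobNorm A ^ 2 = ∑ i, ∑ j, ‖A i j‖ ^ 2 :=
  Real.sq_sqrt (Finset.sum_nonneg fun _ _ => Finset.sum_nonneg fun _ _ => sq_nonneg _)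

lemma frobNorm_smul (c : ℂ) (A : Matrix ι ι ℂ) : frobNorm (c • A) = ‖c‖ * frobNorm A := by
  rw [frobNorm_eq_norm, frobNorm_eq_norm, norm_smul]

lemma frobNorm_conjTranspose (A : Matrix ι ι ℂ) : frobNorm Aᴴ = frobNorm A := by
  rw [frobNorm_eq_norm, frobNorm_eq_norm, frobenius_norm_conjTranspose]

lemma frobNorm_sum_le {κ : Type*} (s : Finset κ) (B : κ → Matrix ι ι ℂ) :
    frobNorm (∑ j ∈ s, B j) ≤ ∑ j ∈ s, frobNorm (B j) := by
  simp only [frobNorm_eq_norm]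
  exact norm_sum_le s B

lemma vnorm_mulVec_le_frobNorm (A : Matrix ι ι ℂ) (x : ι → ℂ) :
    vnorm (A *ᵥ x) ≤ frobNorm A * vnorm x := by
  have h := frobenius_norm_mul A (replicateCol Unit x)
  rwa [← replicateCol_mulVec, frobenius_norm_replicateCol, frobenius_norm_replicateCol,
    ← vnorm_eq_norm_toLp, ← vnorm_eq_norm_toLp, ← frobNorm_eq_norm] at h

variable [DecidableEq ι]

lemma vnorm_mulVec_le_specNorm (A : Matrix ι ι ℂ) (x : ι → ℂ) :
    vnorm (A *ᵥ x) ≤ specNorm A * vnorm x := by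
  rw [vnorm_eq_norm_toLp, vnorm_eq_norm_toLp, ← toEuclideanCLM_toLp]
  exact (toEuclideanCLM (𝕜 := ℂ) A).le_opNorm _

lemma specNorm_le_frobNorm (A : Matrix ι ι ℂ) : specNorm A ≤ frobNorm A := by
  refine ContinuousLinearMap.opNorm_le_bound _ (Real.sqrt_nonneg _) fun x => ?_
  simpa only [vnorm_eq_norm_toLp, ← toEuclideanCLM_toLp] using
    vnorm_mulVec_le_frobNorm A (WithLp.ofLp x)

lemma specNorm_smul (c : ℂ) (A : Matrix ι ι ℂ) : specNorm (c • A) = ‖c‖ * specNorm A := by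
  rw [specNorm, specNorm, map_smul, norm_smul]

lemma specNorm_add_le (A B : Matrix ι ι ℂ) : specNorm (A + B) ≤ specNorm A + specNorm B := by
  rw [specNorm, specNorm, specNorm, map_add]
  exact norm_add_le _ _

end Norms

section HermitianMapping

variable {ι : Type*} [Fintype ι]

lemma frobNorm_sq_vecMulVec_add_vecMulVec (f u : ι → ℂ) :
    ((frobNorm (vecMulVec f (star u) + vecMulVec u (star f)) ^ 2 : ℝ) : ℂ) =
      2 * ((star f ⬝ᵥ f) * (star u ⬝ᵥ u)) + (star u ⬝ᵥ f) ^ 2 + (star f ⬝ᵥ u) ^ 2 := by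
  rw [frobNorm_sq, two_mul]
  nth_rewrite 2 [mul_comm (star f ⬝ᵥ f)]
  push_cast
  simp only [dotProduct, sq, Finset.sum_mul_sum, ← Finset.sum_add_distrib]
  refine Finset.sum_congr rfl fun p _ => Finset.sum_congr rfl fun q _ => ?_
  rw [← sq, ← Complex.conj_mul']
  simp only [Matrix.add_apply, vecMulVec_apply, Pi.star_apply, map_add, map_mul, Complex.star_def,
    Complex.conj_conj]
  ring

lemma frobNorm_sq_vecMulVec_add_vecMulVec_of_real {f u : ι → ℂ} {F M d : ℝ}
    (hff : star f ⬝ᵥ f = F) (huu : star u ⬝ᵥ u = M) (huf : star u ⬝ᵥ f = d) :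
    frobNorm (vecMulVec f (star u) + vecMulVec u (star f)) ^ 2 = 2 * F * M + 2 * d ^ 2 := by
  have hfu : star f ⬝ᵥ u = d := by
    rw [star_dotProduct, huf, Complex.star_def, Complex.conj_ofReal]
  have h := frobNorm_sq_vecMulVec_add_vecMulVec f u
  rw [hff, huu, huf, hfu] at h
  exact_mod_cast h.trans (by push_cast; ring : _ = ((2 * F * M + 2 * d ^ 2 : ℝ) : ℂ))

lemma exists_isHermitian_mulVec_eq {u w : ι → ℂ} (hu : u ≠ 0) {c : ℝ}
    (hc : star u ⬝ᵥ w = c) :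
    ∃ H : Matrix ι ι ℂ, H.IsHermitian ∧ H *ᵥ u = w ∧
      frobNorm H ^ 2 ≤ 2 * vnorm w ^ 2 / vnorm u ^ 2 := by
  set M := vnorm u ^ 2
  have hM : 0 < M := pow_pos (vnorm_pos hu) 2
  have hM' : (M : ℂ) ≠ 0 := Complex.ofReal_ne_zero.mpr hM.ne'
  -- chosen so that `H u = M f + ⟪f, u⟫ u = w` for `H = f u* + u f*`
  set f : ι → ℂ := ((M⁻¹ : ℝ) : ℂ) • w - ((c / (2 * M ^ 2) : ℝ) : ℂ) • u
  have huu : star u ⬝ᵥ u = M := star_dotProduct_self u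
  have hww : star w ⬝ᵥ w = (vnorm w ^ 2 : ℝ) := star_dotProduct_self w
  have hwu : star w ⬝ᵥ u = c := by
    rw [star_dotProduct, hc, Complex.star_def, Complex.conj_ofReal]
  have huf : star u ⬝ᵥ f = ((c / (2 * M)) : ℝ) := by
    simp only [f, dotProduct_sub, dotProduct_smul, hc, huu, smul_eq_mul]
    push_cast
    field_simp
    ring
  have hfu : star f ⬝ᵥ u = ((c / (2 * M)) : ℝ) := by
    rw [star_dotProduct, huf, Complex.star_def, Complex.conj_ofReal]
  have hff : star f ⬝ᵥ f = ((vnorm w ^ 2 / M ^ 2 - 3 / 4 * c ^ 2 / M ^ 3 : ℝ) : ℂ) := by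
    simp only [f, star_sub, star_smul, dotProduct_sub, sub_dotProduct, dotProduct_smul,
      smul_dotProduct, hww, hwu, hc, huu, smul_eq_mul, Complex.star_def, Complex.conj_ofReal]
    push_cast
    field_simp
    ring
  refine ⟨vecMulVec f (star u) + vecMulVec u (star f), ?_, ?_, ?_⟩
  · simp only [IsHermitian, conjTranspose_add, conjTranspose_vecMulVec, star_star]
    exact add_comm _ _
  · ext i
    simp only [add_mulVec, vecMulVec_mulVec, huu, hfu, Pi.add_apply, Pi.smul_apply, f,
      Pi.sub_apply, MulOpposite.smul_eq_mul_unop, MulOpposite.unop_op, smul_eq_mul]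
    push_cast
    field_simp
    ring
  · rw [frobNorm_sq_vecMulVec_add_vecMulVec_of_real hff huu huf]
    have key : 2 * (vnorm w ^ 2 / M ^ 2 - 3 / 4 * c ^ 2 / M ^ 3) * M + 2 * (c / (2 * M)) ^ 2 =
        2 * vnorm w ^ 2 / M - c ^ 2 / M ^ 2 := by
      field_simp
      ring
    have : 0 ≤ c ^ 2 / M ^ 2 := by positivity
    linarith

/-- With `ν ^ 2 = μ`, the condition on `⟪u, w⟫` says exactly that `⟪u, ν̄ w⟫` is real, and
`Δ = (ν / 2) H` for a Hermitian `H` mapping `u` to `ν̄ w` does the job. -/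
lemma exists_smul_conjTranspose_add_mulVec_eq {μ : ℂ} (hμ : ‖μ‖ = 1) {u w : ι → ℂ}
    (hu : u ≠ 0) (hcompat : star u ⬝ᵥ w = μ * star (star u ⬝ᵥ w)) :
    ∃ Δ : Matrix ι ι ℂ, (μ • Δᴴ + Δ) *ᵥ u = w ∧
      frobNorm Δ ^ 2 ≤ vnorm w ^ 2 / (2 * vnorm u ^ 2) := by
  obtain ⟨ν, hν⟩ : ∃ ν : ℂ, ν ^ 2 = μ := IsAlgClosed.exists_pow_nat_eq μ two_pos
  have hνn : ‖ν‖ = 1 := by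
    rw [← pow_left_inj₀ (norm_nonneg ν) zero_le_one two_ne_zero, ← norm_pow, hν, hμ, one_pow]
  have hνν : star ν * ν = 1 := by
    rw [Complex.star_def, Complex.conj_mul', hνn]; norm_num
  have hreal : star (star u ⬝ᵥ (star ν • w)) = star u ⬝ᵥ (star ν • w) := by
    rw [dotProduct_smul, smul_eq_mul, star_mul', star_star]
    nth_rewrite 2 [hcompat]
    rw [← hν]
    linear_combination (-(ν * star (star u ⬝ᵥ w))) * hνν
  obtain ⟨H, hH, hHu, hHF⟩ :=
    exists_isHermitian_mulVec_eq hu (Complex.conj_eq_iff_re.mp hreal).symm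
  refine ⟨(ν / 2) • H, ?_, ?_⟩
  · have hμν : μ * star (ν / 2) = ν / 2 := by
      rw [star_div₀, ← hν]
      simp only [star_ofNat]
      linear_combination (ν / 2) * hνν
    rw [conjTranspose_smul, hH.eq, smul_smul, hμν, ← add_smul, add_halves, smul_mulVec, hHu,
      smul_smul, mul_comm, hνν, one_smul]
  · rw [vnorm_smul, norm_star, hνn, one_mul] at hHF
    rw [frobNorm_smul, mul_pow, norm_div, hνn, Complex.norm_two]
    calc (1 / 2) ^ 2 * frobNorm H ^ 2 ≤ (1 / 2) ^ 2 * (2 * vnorm w ^ 2 / vnorm u ^ 2) := by gcongr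
      _ = vnorm w ^ 2 / (2 * vnorm u ^ 2) := by ring

end HermitianMapping

lemma add_le_sqrt_two_mul_sqrt_sq_add_sq {a b : ℝ} (ha : 0 ≤ a) (hb : 0 ≤ b) :
    a + b ≤ √2 * √(a ^ 2 + b ^ 2) := by
  rw [← Real.sqrt_mul zero_le_two, ← Real.sqrt_sq (add_nonneg ha hb)]
  exact Real.sqrt_le_sqrt (by nlinarith [sq_nonneg (a - b)])

lemma vnorm_mulVec_le_of_add_perturbation_mulVec_eq_zero {ι : Type*} [Fintype ι] [DecidableEq ι]
    {lam : ℂ} (hlam : ‖lam‖ = 1) {L ΔX ΔY : Matrix ι ι ℂ} {u : ι → ℂ}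
    (h : (L + lam • ΔX + ΔY) *ᵥ u = 0) :
    vnorm (L *ᵥ u) ≤ √2 * √(specNorm ΔX ^ 2 + specNorm ΔY ^ 2) * vnorm u := by
  have hLu : L *ᵥ u = -((lam • ΔX + ΔY) *ᵥ u) := by
    rw [eq_neg_iff_add_eq_zero, ← add_mulVec, ← add_assoc, h]
  rw [hLu, vnorm_neg]
  calc vnorm ((lam • ΔX + ΔY) *ᵥ u) ≤ specNorm (lam • ΔX + ΔY) * vnorm u :=
        vnorm_mulVec_le_specNorm _ _
    _ ≤ (specNorm ΔX + specNorm ΔY) * vnorm u := by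
        gcongr
        · exact Real.sqrt_nonneg _
        · simpa only [specNorm_smul, hlam, one_mul] using specNorm_add_le (lam • ΔX) ΔY
    _ ≤ √2 * √(specNorm ΔX ^ 2 + specNorm ΔY ^ 2) * vnorm u := by
        gcongr
        · exact Real.sqrt_nonneg _
        · exact add_le_sqrt_two_mul_sqrt_sq_add_sq (norm_nonneg _) (norm_nonneg _)

section PencilBackwardError

variable {m n : ℕ} {ε lam : ℂ} {X Y : Matrix (Fin m × Fin n) (Fin m × Fin n) ℂ}
  {u : Fin m × Fin n → ℂ}

lemma exists_Heps_perturbation_frobNorm_le (hε : ‖ε‖ = 1) (hlam : ‖lam‖ = 1) (hu : u ≠ 0)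
    (hcompat : star u ⬝ᵥ ((lam • X + Y) *ᵥ u) =
      (lam * ε) * star (star u ⬝ᵥ ((lam • X + Y) *ᵥ u))) :
    ∃ ΔX ΔY : Matrix (Fin m × Fin n) (Fin m × Fin n) ℂ, ΔX = ε • ΔYᴴ ∧
      (lam • X + Y + lam • ΔX + ΔY) *ᵥ u = 0 ∧
      √(frobNorm ΔX ^ 2 + frobNorm ΔY ^ 2) ≤ vnorm ((lam • X + Y) *ᵥ u) / vnorm u := by
  set r := (lam • X + Y) *ᵥ u
  have hcompat' : star u ⬝ᵥ -r = (lam * ε) * star (star u ⬝ᵥ -r) := by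
    rw [dotProduct_neg, star_neg, mul_neg, ← hcompat]
  obtain ⟨Δ, hΔu, hΔF⟩ := exists_smul_conjTranspose_add_mulVec_eq
    (by rw [norm_mul, hlam, hε, one_mul]) hu hcompat'
  refine ⟨ε • Δᴴ, Δ, rfl, ?_, ?_⟩
  · rw [add_assoc, smul_smul, add_mulVec, hΔu, add_neg_cancel]
  · rw [vnorm_neg] at hΔF
    rw [frobNorm_smul, hε, one_mul, frobNorm_conjTranspose]
    rw [← Real.sqrt_sq (div_nonneg (vnorm_nonneg r) (vnorm_nonneg u))]
    refine Real.sqrt_le_sqrt ?_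
    rw [div_pow]
    linarith [show vnorm r ^ 2 / (2 * vnorm u ^ 2) = vnorm r ^ 2 / vnorm u ^ 2 / 2 by ring]

lemma etaPencilF_Heps_le {b : ℝ}
    (h : ∃ ΔX ΔY : Matrix (Fin m × Fin n) (Fin m × Fin n) ℂ, ΔX = ε • ΔYᴴ ∧
      (lam • X + Y + lam • ΔX + ΔY) *ᵥ u = 0 ∧ √(frobNorm ΔX ^ 2 + frobNorm ΔY ^ 2) ≤ b) :
    etaPencilF_Heps ε X Y lam u ≤ b := by
  obtain ⟨ΔX, ΔY, hX, hL, hb⟩ := h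
  refine csInf_le_of_le ⟨0, ?_⟩ ⟨ΔX, ΔY, hX, hL, rfl⟩ hb
  rintro e ⟨-, -, -, -, rfl⟩
  exact Real.sqrt_nonneg _

lemma etaPencil2_Heps_le_etaPencilF_Heps
    (h : ∃ ΔX ΔY : Matrix (Fin m × Fin n) (Fin m × Fin n) ℂ, ΔX = ε • ΔYᴴ ∧
      (lam • X + Y + lam • ΔX + ΔY) *ᵥ u = 0) :
    etaPencil2_Heps ε X Y lam u ≤ etaPencilF_Heps ε X Y lam u := by
  obtain ⟨ΔX, ΔY, hX, hL⟩ := h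
  unfold etaPencil2_Heps etaPencilF_Heps
  refine le_csInf ?_ ?_
  · exact ⟨_, ΔX, ΔY, hX, hL, rfl⟩
  rintro e ⟨ΔX, ΔY, hX, hL, rfl⟩
  refine csInf_le_of_le ⟨0, ?_⟩ ⟨ΔX, ΔY, hX, hL, rfl⟩ ?_
  · rintro e ⟨-, -, -, -, rfl⟩
    exact Real.sqrt_nonneg _
  · have hsq (A : Matrix (Fin m × Fin n) (Fin m × Fin n) ℂ) : specNorm A ^ 2 ≤ frobNorm A ^ 2 :=
      pow_le_pow_left₀ (norm_nonneg _) (specNorm_le_frobNorm A) 2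
    exact Real.sqrt_le_sqrt (add_le_add (hsq ΔX) (hsq ΔY))

lemma le_etaPencil2_Heps (hlam : ‖lam‖ = 1) (hu : u ≠ 0)
    (h : ∃ ΔX ΔY : Matrix (Fin m × Fin n) (Fin m × Fin n) ℂ, ΔX = ε • ΔYᴴ ∧
      (lam • X + Y + lam • ΔX + ΔY) *ᵥ u = 0) :
    vnorm ((lam • X + Y) *ᵥ u) / (√2 * vnorm u) ≤ etaPencil2_Heps ε X Y lam u := by
  obtain ⟨ΔX, ΔY, hX, hL⟩ := h
  unfold etaPencil2_Heps
  refine le_csInf ?_ ?_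
  · exact ⟨_, ΔX, ΔY, hX, hL, rfl⟩
  rintro e ⟨ΔX, ΔY, -, hL, rfl⟩
  rw [div_le_iff₀ (by positivity [vnorm_pos hu])]
  linarith [vnorm_mulVec_le_of_add_perturbation_mulVec_eq_zero hlam hL]

end PencilBackwardError

lemma colKron_mulVec {m n : ℕ} (a : Fin m → ℂ) (B : Matrix (Fin n) (Fin n) ℂ) (x : Fin n → ℂ) :
    colKron a B *ᵥ x = vKron a (B *ᵥ x) := by
  ext p
  simp only [colKron, vKron, mulVec, dotProduct, Finset.mul_sum, mul_assoc]

lemma pencil_mulVec_vKron_Lam1 {m n : ℕ} {X Y : Matrix (Fin m × Fin n) (Fin m × Fin n) ℂ}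
    {v : Fin m → ℂ} {A : ℕ → Matrix (Fin n) (Fin n) ℂ}
    (hL : ∀ z : ℂ, (z • X + Y) * colKron (Lam1 m z) (1 : Matrix (Fin n) (Fin n) ℂ)
        = colKron v (evalP m A z)) (z : ℂ) (x : Fin n → ℂ) :
    (z • X + Y) *ᵥ vKron (Lam1 m z) x = vKron v (evalP m A z *ᵥ x) := by
  rw [← colKron_mulVec, ← hL z, ← mulVec_mulVec, colKron_mulVec, one_mulVec]

lemma vnorm_vKron {m n : ℕ} (a : Fin m → ℂ) (b : Fin n → ℂ) :
    vnorm (vKron a b) = vnorm a * vnorm b := by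
  rw [vnorm, vnorm, vnorm, ← Real.sqrt_mul (Finset.sum_nonneg fun _ _ => sq_nonneg _),
    Fintype.sum_prod_type, Finset.sum_mul_sum]
  simp only [vKron, norm_mul, mul_pow]

lemma star_dotProduct_vKron {m n : ℕ} (a c : Fin m → ℂ) (b d : Fin n → ℂ) :
    star (vKron a b) ⬝ᵥ vKron c d = (star a ⬝ᵥ c) * (star b ⬝ᵥ d) := by
  rw [dotProduct, Fintype.sum_prod_type, dotProduct, dotProduct, Finset.sum_mul_sum]
  simp only [vKron, Pi.star_apply, star_mul']
  exact Finset.sum_congr rfl fun i _ => Finset.sum_congr rfl fun j _ => by ring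

lemma vnorm_Lam1 {m : ℕ} {z : ℂ} (hz : ‖z‖ = 1) : vnorm (Lam1 m z) = √m := by
  simp [vnorm, Lam1, hz]

lemma LamNormSq_of_norm_eq_one {m : ℕ} {z : ℂ} (hz : ‖z‖ = 1) : LamNormSq m z = m + 1 := by
  simp [LamNormSq, hz]

lemma pow_mul_star_pow_of_norm_eq_one {z : ℂ} (hz : ‖z‖ = 1) {j k : ℕ} (h : j ≤ k) :
    z ^ k * star z ^ j = z ^ (k - j) := by
  have hzz : z * star z = 1 := by rw [Complex.star_def, Complex.mul_conj', hz]; norm_num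
  rw [← pow_sub_mul_pow z h, mul_assoc, ← mul_pow, hzz, one_pow, mul_one]

lemma evalP_conjTranspose_of_norm_eq_one {n m : ℕ} {A : ℕ → Matrix (Fin n) (Fin n) ℂ} {z : ℂ}
    (hpal : ∀ j ≤ m, A (m - j) = (A j)ᴴ) (hz : ‖z‖ = 1) :
    (evalP m A z)ᴴ = star z ^ m • evalP m A z := by
  have hz' : ‖star z‖ = 1 := by rwa [norm_star]
  calc (evalP m A z)ᴴ = ∑ j ∈ Finset.range (m + 1), star z ^ j • A (m - j) := by
        rw [evalP, conjTranspose_sum]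
        refine Finset.sum_congr rfl fun j hj => ?_
        rw [conjTranspose_smul, star_pow, hpal j (Finset.mem_range_succ_iff.mp hj)]
    _ = ∑ j ∈ Finset.range (m + 1), star z ^ (m - j) • A j := by
        rw [← Finset.sum_range_reflect]
        refine Finset.sum_congr rfl fun j hj => ?_
        rw [Nat.add_sub_cancel, Nat.sub_sub_self (Finset.mem_range_succ_iff.mp hj)]
    _ = star z ^ m • evalP m A z := by
        rw [evalP, Finset.smul_sum]
        refine Finset.sum_congr rfl fun j hj => ?_
        rw [smul_smul, ← star_star z, star_star (star z),
          pow_mul_star_pow_of_norm_eq_one hz' (Finset.mem_range_succ_iff.mp hj)]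

lemma star_star_dotProduct_mulVec_of_conjTranspose_eq {ι : Type*} [Fintype ι]
    {B : Matrix ι ι ℂ} {α : ℂ} (hB : Bᴴ = α • B) (x : ι → ℂ) :
    star (star x ⬝ᵥ B *ᵥ x) = α * (star x ⬝ᵥ B *ᵥ x) := by
  rw [← star_dotProduct, star_mulVec, ← dotProduct_mulVec, hB, smul_mulVec, dotProduct_smul,
    smul_eq_mul]

lemma star_Lam1_dotProduct {m : ℕ} {z ε : ℂ} (hz : ‖z‖ = 1) (hε : star ε = ε) {v : Fin m → ℂ}
    (hvR : ∀ i : Fin m, v i.rev = ε * star (v i)) :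
    star (star (Lam1 m z) ⬝ᵥ v) = ε * z ^ (m - 1) * (star (Lam1 m z) ⬝ᵥ v) := by
  rw [← star_dotProduct, dotProduct, dotProduct, Finset.mul_sum, ← Equiv.sum_comp Fin.revPerm]
  refine Finset.sum_congr rfl fun i _ => ?_
  have hv : star (v i.rev) = ε * v i := by rw [hvR, star_mul', hε, star_star]
  have hexp : m - 1 - (i.rev : ℕ) = m - 1 - (m - 1 - (i : ℕ)) := by
    rw [Fin.val_rev]; omega
  simp only [Fin.revPerm_apply, Pi.star_apply, Lam1, hv, star_pow]
  rw [hexp, ← pow_mul_star_pow_of_norm_eq_one hz (Nat.sub_le _ _)]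
  ring

lemma star_vKron_Lam1_dotProduct_vKron_evalP {m n : ℕ} (hm : 1 ≤ m)
    {A : ℕ → Matrix (Fin n) (Fin n) ℂ} (hpal : ∀ j ≤ m, A (m - j) = (A j)ᴴ)
    {ε : ℂ} (hε : ε = 1 ∨ ε = -1) {v : Fin m → ℂ}
    (hvR : ∀ i : Fin m, v i.rev = ε * star (v i)) {z : ℂ} (hz : ‖z‖ = 1) (x : Fin n → ℂ) :
    star (vKron (Lam1 m z) x) ⬝ᵥ vKron v (evalP m A z *ᵥ x) =
      (z * ε) * star (star (vKron (Lam1 m z) x) ⬝ᵥ vKron v (evalP m A z *ᵥ x)) := by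
  have hεstar : star ε = ε := by rcases hε with rfl | rfl <;> simp
  have hεε : ε * ε = 1 := by rcases hε with rfl | rfl <;> norm_num
  have hzm : z * z ^ (m - 1) = z ^ m := by rw [← pow_succ', Nat.sub_add_cancel hm]
  have hzz : z ^ m * star z ^ m = 1 := by
    rw [pow_mul_star_pow_of_norm_eq_one hz le_rfl, Nat.sub_self, pow_zero]
  rw [star_dotProduct_vKron, star_mul', star_Lam1_dotProduct hz hεstar hvR,
    star_star_dotProduct_mulVec_of_conjTranspose_eq
      (evalP_conjTranspose_of_norm_eq_one hpal hz) x]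
  linear_combination (-(star (Lam1 m z) ⬝ᵥ v) * (star x ⬝ᵥ evalP m A z *ᵥ x)) *
    (hzz + z ^ m * star z ^ m * hεε + hzm * (ε * ε * star z ^ m))

lemma frobNorm_evalP_le {n : ℕ} (m : ℕ) (Δ : ℕ → Matrix (Fin n) (Fin n) ℂ) {z : ℂ}
    (hz : ‖z‖ = 1) :
    frobNorm (evalP m Δ z) ≤
      √(m + 1) * √(∑ j ∈ Finset.range (m + 1), frobNorm (Δ j) ^ 2) := by
  have hsum : 0 ≤ ∑ j ∈ Finset.range (m + 1), frobNorm (Δ j) :=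
    Finset.sum_nonneg fun _ _ => Real.sqrt_nonneg _
  calc frobNorm (evalP m Δ z) ≤ ∑ j ∈ Finset.range (m + 1), frobNorm (Δ j) := by
        refine (frobNorm_sum_le _ _).trans_eq (Finset.sum_congr rfl fun j _ => ?_)
        rw [frobNorm_smul, norm_pow, hz, one_pow, one_mul]
    _ ≤ √((m + 1) * ∑ j ∈ Finset.range (m + 1), frobNorm (Δ j) ^ 2) := by
        rw [← Real.sqrt_sq hsum]
        refine Real.sqrt_le_sqrt ((sq_sum_le_card_mul_sum_sq).trans_eq ?_)
        push_cast [Finset.card_range]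
        rfl
    _ = _ := Real.sqrt_mul (by positivity) _

lemma Real.sInf_eq_zero_or_le_sInf {s : Set ℝ} {b : ℝ} (h : ∀ e ∈ s, b ≤ e) :
    sInf s = 0 ∨ b ≤ sInf s := by
  rcases s.eq_empty_or_nonempty with rfl | hne
  · exact Or.inl Real.sInf_empty
  · exact Or.inr (le_csInf hne h)

/-- The first alternative is the junk value `sInf ∅ = 0`. -/
lemma etaF_Hpal_eq_zero_or_le {n m : ℕ} (A : ℕ → Matrix (Fin n) (Fin n) ℂ) {z : ℂ}
    (hz : ‖z‖ = 1) {x : Fin n → ℂ} (hx : vnorm x = 1) :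
    etaF_Hpal m A z x = 0 ∨ vnorm (evalP m A z *ᵥ x) / √(m + 1) ≤ etaF_Hpal m A z x := by
  refine Real.sInf_eq_zero_or_le_sInf ?_
  rintro e ⟨Δ, -, hΔ, rfl⟩
  rw [div_le_iff₀ (by positivity), eq_neg_of_add_eq_zero_left hΔ, vnorm_neg, mul_comm]
  exact (vnorm_mulVec_le_frobNorm _ x).trans (by rw [hx, mul_one]; exact frobNorm_evalP_le m Δ hz)

lemma div_sqrt_le_sqrt_two_mul_div_sqrt_add_one {K m : ℝ} (hK : 0 ≤ K) (hm : 1 ≤ m) :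
    K / √m ≤ √2 * (K / √(m + 1)) := by
  rw [mul_div_assoc', div_le_div_iff₀ (by positivity) (by positivity)]
  calc K * √(m + 1) ≤ K * √(2 * m) := by gcongr; linarith
    _ = √2 * K * √m := by rw [Real.sqrt_mul zero_le_two]; ring

lemma div_sqrt_two_mul_sqrt_eq {K m : ℝ} (hm : 0 < m) :
    K / (√2 * √m) = √((m + 1) / (2 * m)) * (K / √(m + 1)) := by
  rw [Real.sqrt_div (by linarith), Real.sqrt_mul zero_le_two]
  field_simp

theorem stmt_17_general {m n : ℕ} (hm : 1 ≤ m)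
    (A : ℕ → Matrix (Fin n) (Fin n) ℂ)
    (hpal : ∀ j ≤ m, A (m - j) = (A j).conjTranspose)
    (ε : ℂ) (hε : ε = 1 ∨ ε = -1)
    (v : Fin m → ℂ) (hv1 : vnorm v = 1)
    (hvR : ∀ i : Fin m, v i.rev = ε * (starRingEnd ℂ) (v i))
    (X Y : Matrix (Fin m × Fin n) (Fin m × Fin n) ℂ)
    (hL : ∀ z : ℂ, (z • X + Y) * colKron (Lam1 m z) (1 : Matrix (Fin n) (Fin n) ℂ)
        = colKron v (evalP m A z))
    (lam : ℂ) (hlam : ‖lam‖ = 1)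
    (x : Fin n → ℂ) (hx : vnorm x = 1)
    (hnz : (evalP m A lam).mulVec x ≠ 0) :
    (Real.sqrt (((m : ℝ) + 1) / (2 * m)) ≤
        etaPencilF_Heps ε X Y lam (vKron (Lam1 m lam) x) /
          (vnorm ((evalP m A lam).mulVec x) / Real.sqrt (LamNormSq m lam)) ∧
      etaPencilF_Heps ε X Y lam (vKron (Lam1 m lam) x) /
          (vnorm ((evalP m A lam).mulVec x) / Real.sqrt (LamNormSq m lam)) ≤
        Real.sqrt 2) ∧
    etaPencilF_Heps ε X Y lam (vKron (Lam1 m lam) x) / etaF_Hpal m A lam x ≤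
      Real.sqrt 2 ∧
    (Real.sqrt (((m : ℝ) + 1) / (2 * m)) ≤
        etaPencil2_Heps ε X Y lam (vKron (Lam1 m lam) x) /
          (vnorm ((evalP m A lam).mulVec x) / Real.sqrt (LamNormSq m lam)) ∧
      etaPencil2_Heps ε X Y lam (vKron (Lam1 m lam) x) /
          (vnorm ((evalP m A lam).mulVec x) / Real.sqrt (LamNormSq m lam)) ≤
        Real.sqrt 2) := by
  have hm0 : (0 : ℝ) < m := by exact_mod_cast hm
  have hK : 0 < vnorm (evalP m A lam *ᵥ x) := vnorm_pos hnz
  have hu : vnorm (vKron (Lam1 m lam) x) = √m := by rw [vnorm_vKron, vnorm_Lam1 hlam, hx, mul_one]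
  have hu0 : vKron (Lam1 m lam) x ≠ 0 := ne_of_apply_ne vnorm (by rw [hu]; simp [vnorm, hm0.ne'])
  have hLu := pencil_mulVec_vKron_Lam1 hL lam x
  have hr : vnorm ((lam • X + Y) *ᵥ vKron (Lam1 m lam) x) = vnorm (evalP m A lam *ᵥ x) := by
    rw [hLu, vnorm_vKron, hv1, one_mul]
  have hcompat := hLu ▸ star_vKron_Lam1_dotProduct_vKron_evalP hm hpal hε hvR hlam x
  obtain ⟨ΔX, ΔY, hX, hΔ, hF⟩ := exists_Heps_perturbation_frobNorm_le
    (by rcases hε with rfl | rfl <;> simp) hlam hu0 hcompat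
  have hlo := le_etaPencil2_Heps hlam hu0 ⟨ΔX, ΔY, hX, hΔ⟩
  have hmid := etaPencil2_Heps_le_etaPencilF_Heps ⟨ΔX, ΔY, hX, hΔ⟩
  have hhi := etaPencilF_Heps_le ⟨ΔX, ΔY, hX, hΔ, hF⟩
  rw [hr, hu, div_sqrt_two_mul_sqrt_eq hm0] at hlo
  rw [hr, hu] at hhi
  replace hhi := hhi.trans (div_sqrt_le_sqrt_two_mul_div_sqrt_add_one hK.le (by exact_mod_cast hm))
  rw [LamNormSq_of_norm_eq_one hlam]
  have hD : 0 < vnorm (evalP m A lam *ᵥ x) / √(m + 1) := by positivity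
  refine ⟨⟨?_, ?_⟩, ?_, ⟨?_, ?_⟩⟩
  · rw [le_div_iff₀ hD]; linarith
  · rw [div_le_iff₀ hD]; exact hhi
  · rcases etaF_Hpal_eq_zero_or_le A hlam hx with hP | hP
    · rw [hP, div_zero]; positivity
    · rw [div_le_iff₀ (hD.trans_le hP)]
      exact hhi.trans (mul_le_mul_of_nonneg_left hP (Real.sqrt_nonneg 2))
  · rw [le_div_iff₀ hD]; exact hlo
  · rw [div_le_iff₀ hD]; linarith

/-- backward-error comparison between an H-palindromic (`ε = 1`,
ansatz `Rv = conj v`) or H-anti-palindromic (`ε = −1`, ansatz `Rv = −conj v`)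
linearization `L` of an H-palindromic polynomial `P`, for |λ| = 1. -/
theorem stmt_17 {m n : ℕ} (hm : 1 ≤ m) (hn : 0 < n)
    (A : ℕ → Matrix (Fin n) (Fin n) ℂ)
    (hpal : ∀ j ≤ m, A (m - j) = (A j).conjTranspose)
    (hreg : ∃ z : ℂ, (evalP m A z).det ≠ 0)
    (ε : ℂ) (hε : ε = 1 ∨ ε = -1)
    (v : Fin m → ℂ) (hv1 : vnorm v = 1)
    (hvR : ∀ i : Fin m, v i.rev = ε * (starRingEnd ℂ) (v i))
    (X Y : Matrix (Fin m × Fin n) (Fin m × Fin n) ℂ) (hXY : X = ε • Y.conjTranspose)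
    (hL : ∀ z : ℂ, (z • X + Y) * colKron (Lam1 m z) (1 : Matrix (Fin n) (Fin n) ℂ)
        = colKron v (evalP m A z))
    (lam : ℂ) (hlam : ‖lam‖ = 1)
    (x : Fin n → ℂ) (hx : vnorm x = 1)
    (hnz : (evalP m A lam).mulVec x ≠ 0) :
    (Real.sqrt (((m : ℝ) + 1) / (2 * m)) ≤
        etaPencilF_Heps ε X Y lam (vKron (Lam1 m lam) x) /
          (vnorm ((evalP m A lam).mulVec x) / Real.sqrt (LamNormSq m lam)) ∧
      etaPencilF_Heps ε X Y lam (vKron (Lam1 m lam) x) /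
          (vnorm ((evalP m A lam).mulVec x) / Real.sqrt (LamNormSq m lam)) ≤
        Real.sqrt 2) ∧
    etaPencilF_Heps ε X Y lam (vKron (Lam1 m lam) x) / etaF_Hpal m A lam x ≤
      Real.sqrt 2 ∧
    (Real.sqrt (((m : ℝ) + 1) / (2 * m)) ≤
        etaPencil2_Heps ε X Y lam (vKron (Lam1 m lam) x) /
          (vnorm ((evalP m A lam).mulVec x) / Real.sqrt (LamNormSq m lam)) ∧
      etaPencil2_Heps ε X Y lam (vKron (Lam1 m lam) x) /
          (vnorm ((evalP m A lam).mulVec x) / Real.sqrt (LamNormSq m lam)) ≤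
        Real.sqrt 2) :=
  stmt_17_general hm A hpal ε hε v hv1 hvR X Y hL lam hlam x hx hnz
end
end

section
/- Let m be an odd positive integer, λ ∈ ℂ, c ∈ ℂ, and ε ∈ {1, −1}; assume λ ≠ −1 if ε = 1 and λ ≠ 1 if ε = −1. Set N := ‖Π₊(Λ_m)‖₂² if ε = 1 and N := ‖Π₋(Λ_m)‖₂² if ε = −1 (then N > 0). Define a_j := (conj(λ)^j + ε·conj(λ)^{m−j}) c / (2N) for j = 0, …, m. Then: a_{m−j} = ε a_j for all j; Σ_{j=0}^m a_j λ^j = c; Σ_{j=0}^m |a_j|² = |c|²/N; and every b = (b_0, …, b_m) ∈ ℂ^{m+1} with b_{m−j} = ε b_j for all j and Σ_{j=0}^m b_j λ^j = c satisfies Σ_{j=0}^m |b_j|² ≥ |c|²/N. -/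
/-!
Write `w_j := λ^j + ε λ^{m-j}` (`reflPow m ε lam j`), so that `w = 2 Π_ε(Λ_m)`. It is `ε`-symmetric, and for every
`ε`-symmetric `b` one has `2 ∑ b_j λ^j = ∑ b_j w_j`: on the symmetric subspace the constraint is
the inner product with `conj w`. Since `m` is odd, `∑ |w_j|² = 4N`, and `N > 0` because
`w_0 = w_1 = 0` would force `λ² = 1` and then `λ = -ε`. Hence `a = conj(w) c / (2N)` satisfies the
constraint, and Cauchy–Schwarz `4|c|² = |∑ b_j w_j|² ≤ 4N ∑ |b_j|²` shows it has minimal norm.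
-/

noncomputable section

open Finset

def reflPow (m : ℕ) (ε lam : ℂ) (j : ℕ) : ℂ :=
  lam ^ j + ε * lam ^ (m - j)

section

variable {m : ℕ} {ε : ℂ}

lemma reflPow_sub (hε : ε * ε = 1) (lam : ℂ) {j : ℕ} (hj : j ≤ m) :
    reflPow m ε lam (m - j) = ε * reflPow m ε lam j := by
  rw [reflPow, reflPow, Nat.sub_sub_self hj]
  linear_combination (-lam ^ (m - j)) * hε

lemma two_mul_sum_mul_pow_of_symm (lam : ℂ) {b : ℕ → ℂ}
    (hb : ∀ j ≤ m, b (m - j) = ε * b j) :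
    2 * ∑ j ∈ range (m + 1), b j * lam ^ j = ∑ j ∈ range (m + 1), b j * reflPow m ε lam j := by
  have hreflect : ∑ j ∈ range (m + 1), b j * lam ^ j
      = ε * ∑ j ∈ range (m + 1), b j * lam ^ (m - j) := by
    rw [← sum_range_reflect, mul_sum]
    refine sum_congr rfl fun j hj => ?_
    have hj : j ≤ m := Nat.lt_succ_iff.mp (mem_range.mp hj)
    rw [Nat.add_sub_cancel, hb j hj]
    ring
  have hpull : ∑ j ∈ range (m + 1), b j * (ε * lam ^ (m - j))
      = ε * ∑ j ∈ range (m + 1), b j * lam ^ (m - j) := by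
    rw [mul_sum]
    exact sum_congr rfl fun _ _ => by ring
  simp only [reflPow, mul_add, sum_add_distrib, hpull]
  linear_combination hreflect

lemma sum_range_succ_eq_two_mul_of_odd (hm : Odd m) {f : ℕ → ℝ}
    (hf : ∀ j ≤ m, f (m - j) = f j) :
    ∑ j ∈ range (m + 1), f j = 2 * ∑ j ∈ range ((m + 1) / 2), f j := by
  obtain ⟨K, rfl⟩ := hm
  have hhalf : (2 * K + 1 + 1) / 2 = K + 1 := by omega
  rw [hhalf, show 2 * K + 1 + 1 = (K + 1) + (K + 1) by ring, sum_range_add, two_mul,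
    ← sum_range_reflect (fun i => f (K + 1 + i))]
  congr 1
  refine sum_congr rfl fun i hi => ?_
  have hi : i < K + 1 := mem_range.mp hi
  rw [show K + 1 + (K + 1 - 1 - i) = 2 * K + 1 - i by omega, hf i (by omega)]

lemma norm_sq_sum_mul_le (s : Finset ℕ) (b w : ℕ → ℂ) :
    ‖∑ j ∈ s, b j * w j‖ ^ 2 ≤ (∑ j ∈ s, ‖b j‖ ^ 2) * ∑ j ∈ s, ‖w j‖ ^ 2 :=
  calc ‖∑ j ∈ s, b j * w j‖ ^ 2 ≤ (∑ j ∈ s, ‖b j‖ * ‖w j‖) ^ 2 := by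
        gcongr
        simpa only [norm_mul] using norm_sum_le s (fun j => b j * w j)
    _ ≤ _ := sum_mul_sq_le_sq_mul_sq _ _ _

section ConjMul

variable {s : Finset ℕ} {a w : ℕ → ℂ} {k : ℂ}

lemma sum_mul_eq_of_eq_conj_mul (ha : ∀ j ∈ s, a j = starRingEnd ℂ (w j) * k) :
    ∑ j ∈ s, a j * w j = ((∑ j ∈ s, ‖w j‖ ^ 2 : ℝ) : ℂ) * k := by
  push_cast
  rw [sum_mul]
  exact sum_congr rfl fun j hj => by rw [ha j hj, ← Complex.conj_mul' (w j)]; ring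

lemma sum_norm_sq_eq_of_eq_conj_mul (ha : ∀ j ∈ s, a j = starRingEnd ℂ (w j) * k) :
    ∑ j ∈ s, ‖a j‖ ^ 2 = (∑ j ∈ s, ‖w j‖ ^ 2) * ‖k‖ ^ 2 := by
  rw [sum_mul]
  exact sum_congr rfl fun j hj => by rw [ha j hj, norm_mul, RCLike.norm_conj, mul_pow]

end ConjMul

variable (ε) in
lemma conj_eq_self_and_norm_eq_one (hε : ε = 1 ∨ ε = -1) : starRingEnd ℂ ε = ε ∧ ‖ε‖ = 1 := by
  rcases hε with rfl | rfl <;> simp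

lemma piSq_eq_sum_norm_sq_reflPow (hm : Odd m) (hε : ε = 1 ∨ ε = -1) (lam : ℂ) :
    (if ε = 1 then PiPlusSq m lam else PiMinusSq m lam)
      = ∑ j ∈ range ((m + 1) / 2), ‖reflPow m ε lam j‖ ^ 2 / 2 := by
  have hmod : m % 2 = 1 := Nat.odd_iff.mp hm
  rcases hε with rfl | rfl
  · simp only [if_true, PiPlusSq, hmod, reflPow, one_mul]
  · simp only [show (-1 : ℂ) ≠ 1 by norm_num, PiMinusSq, hmod, reflPow, neg_one_mul,
      ← sub_eq_add_neg, ↓reduceIte]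

lemma sum_norm_sq_reflPow (hm : Odd m) (hε : ε = 1 ∨ ε = -1) (lam : ℂ) :
    ∑ j ∈ range (m + 1), ‖reflPow m ε lam j‖ ^ 2
      = 4 * if ε = 1 then PiPlusSq m lam else PiMinusSq m lam := by
  have hε2 : ε * ε = 1 := by rcases hε with rfl | rfl <;> norm_num
  rw [piSq_eq_sum_norm_sq_reflPow hm hε, sum_range_succ_eq_two_mul_of_odd hm, ← sum_div]
  · ring
  · intro j hj
    rw [reflPow_sub hε2 lam hj, norm_mul, (conj_eq_self_and_norm_eq_one ε hε).2, one_mul]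

lemma sum_norm_sq_reflPow_pos (hm : Odd m) {lam : ℂ}
    (hlam1 : ε = 1 → lam ≠ -1) (hlam2 : ε = -1 → lam ≠ 1) :
    0 < ∑ j ∈ range (m + 1), ‖reflPow m ε lam j‖ ^ 2 := by
  have hm1 : 1 ≤ m := hm.pos
  suffices h : reflPow m ε lam 0 ≠ 0 ∨ reflPow m ε lam 1 ≠ 0 by
    have hnonneg : ∀ j ∈ range (m + 1), 0 ≤ ‖reflPow m ε lam j‖ ^ 2 := fun _ _ => by positivity
    rcases h with h | h
    · exact sum_pos' hnonneg ⟨0, by simp, by positivity⟩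
    · exact sum_pos' hnonneg ⟨1, by simp; omega, by positivity⟩
  by_contra! h
  obtain ⟨h0, h1⟩ := h
  simp only [reflPow, pow_zero, pow_one, Nat.sub_zero] at h0 h1
  have hpow : lam ^ m = lam * lam ^ (m - 1) := by rw [← pow_succ', Nat.sub_add_cancel hm1]
  have hsq : (lam - 1) * (lam + 1) = 0 := by linear_combination lam * h1 - h0 + ε * hpow
  rcases mul_eq_zero.mp hsq with hl | hl
  · have hl : lam = 1 := by linear_combination hl
    rw [hl, one_pow, mul_one] at h0
    exact hlam2 (by linear_combination h0) hl
  · have hl : lam = -1 := by linear_combination hl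
    rw [hl, hm.neg_one_pow] at h0
    exact hlam1 (by linear_combination -h0) hl

end

/-- minimum-norm solution of `∑_{j=0}^m a_j λ^j = c` subject to the
symmetry `a_{m−j} = ε a_j`, for m odd. -/
theorem stmt_18 (m : ℕ) (hm : Odd m) (lam c ε : ℂ) (hε : ε = 1 ∨ ε = -1)
    (hlam1 : ε = 1 → lam ≠ -1) (hlam2 : ε = -1 → lam ≠ 1)
    (N : ℝ) (hN : N = if ε = 1 then PiPlusSq m lam else PiMinusSq m lam)
    (a : ℕ → ℂ)
    (ha : ∀ j ≤ m, a j =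
      ((starRingEnd ℂ lam) ^ j + ε * (starRingEnd ℂ lam) ^ (m - j)) * c / (2 * (N : ℂ))) :
    0 < N ∧
    (∀ j ≤ m, a (m - j) = ε * a j) ∧
    (∑ j ∈ Finset.range (m + 1), a j * lam ^ j = c) ∧
    (∑ j ∈ Finset.range (m + 1), ‖a j‖ ^ 2 = ‖c‖ ^ 2 / N) ∧
    (∀ b : ℕ → ℂ, (∀ j ≤ m, b (m - j) = ε * b j) →
      (∑ j ∈ Finset.range (m + 1), b j * lam ^ j = c) →
      ‖c‖ ^ 2 / N ≤ ∑ j ∈ Finset.range (m + 1), ‖b j‖ ^ 2) := by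
  set w := reflPow m ε lam
  have hε2 : ε * ε = 1 := by rcases hε with rfl | rfl <;> norm_num
  have hεconj := (conj_eq_self_and_norm_eq_one ε hε).1
  have hwsym : ∀ j ≤ m, w (m - j) = ε * w j := fun j hj => reflPow_sub hε2 lam hj
  have hS : ∑ j ∈ range (m + 1), ‖w j‖ ^ 2 = 4 * N := hN ▸ sum_norm_sq_reflPow hm hε lam
  have hNpos : 0 < N := by linarith [sum_norm_sq_reflPow_pos hm hlam1 hlam2 (ε := ε)]
  have hN0 : (N : ℂ) ≠ 0 := by exact_mod_cast hNpos.ne'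
  have ha' : ∀ j ∈ range (m + 1), a j = starRingEnd ℂ (w j) * (c / (2 * N)) := fun j hj => by
    rw [ha j (mem_range_succ_iff.mp hj)]
    simp only [w, reflPow, map_add, map_mul, map_pow, hεconj]
    ring
  have hasymm : ∀ j ≤ m, a (m - j) = ε * a j := fun j hj => by
    rw [ha' _ (mem_range_succ_iff.mpr (Nat.sub_le m j)), ha' j (mem_range_succ_iff.mpr hj),
      hwsym j hj, map_mul, hεconj]
    ring
  have hsum_aw : ∑ j ∈ range (m + 1), a j * w j = 2 * c := by
    rw [sum_mul_eq_of_eq_conj_mul ha', hS]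
    push_cast
    field_simp
    ring
  refine ⟨hNpos, hasymm, ?_, ?_, fun b hb hbc => ?_⟩
  · linear_combination (two_mul_sum_mul_pow_of_symm lam hasymm).trans hsum_aw / 2
  · have hnorm : ‖c / (2 * (N : ℂ))‖ = ‖c‖ / (2 * N) := by
      rw [norm_div, norm_mul, Complex.norm_real, Real.norm_of_nonneg hNpos.le, Complex.norm_two]
    rw [sum_norm_sq_eq_of_eq_conj_mul ha', hS, hnorm]
    field_simp
    ring
  · have hcs := norm_sq_sum_mul_le (range (m + 1)) b w
    rw [← two_mul_sum_mul_pow_of_symm lam hb, hbc, hS, norm_mul, Complex.norm_two] at hcs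
    rw [div_le_iff₀ hNpos]
    linarith
end
end
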